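/- Any graph containing an isometric copy of a one-way infinite path is robber-win: the robber can avoid capture forever, even against any finite number of cops. -/
import Mathlib


structure RefGraph (V : Type*) where
  Adj : V → V → Prop
  symm : ∀ u v, Adj u v → Adj v u
  refl : ∀ v, Adj v v

/-- There is a walk of length `k` from `u` to `v` in `G`. -/
def HasWalk {V : Type*} (G : RefGraph V) (u v : V) (k : ℕ) : Prop :=
  ∃ p : ℕ → V, p 0 = u ∧ p k = v ∧ ∀ i < k, G.Adj (p i) (p (i + 1))

/-- Positions of `k` cops starting at `c0`, moving simultaneously according to the
strategy `S` against the robber play `rb`. -/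
def copsSeq {V : Type*} {k : ℕ} (S : (Fin k → V) → V → (Fin k → V))
    (c0 : Fin k → V) (rb : ℕ → V) : ℕ → (Fin k → V)
  | 0 => c0
  | n + 1 => S (copsSeq S c0 rb n) (rb n)

lemma hasWalk_symm {V : Type*} (G : RefGraph V) {u w : V} {k : ℕ}
    (h : HasWalk G u w k) : HasWalk G w u k := by
  obtain ⟨p, h0, hk, ha⟩ := h
  refine ⟨fun i => p (k - i), by simpa using hk, by simpa using h0, ?_⟩
  intro i hi
  show G.Adj (p (k - i)) (p (k - (i + 1)))
  have h1 : k - i = (k - (i + 1)) + 1 := by omega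
  rw [h1]
  exact G.symm _ _ (ha (k - (i + 1)) (by omega))

lemma hasWalk_trans {V : Type*} (G : RefGraph V) {u w x : V} {k l : ℕ}
    (h1 : HasWalk G u w k) (h2 : HasWalk G w x l) : HasWalk G u x (k + l) := by
  obtain ⟨p, p0, pk, pa⟩ := h1
  obtain ⟨q, q0, ql, qa⟩ := h2
  refine ⟨fun i => if i ≤ k then p i else q (i - k), by simp [p0], ?_, ?_⟩
  · by_cases h : l = 0
    · subst h; simpa [pk, ← q0] using ql
    · have : ¬ (k + l ≤ k) := by omega
      simp only [this, if_false]
      simpa using ql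
  · intro i hi
    show G.Adj (if i ≤ k then p i else q (i - k)) (if i + 1 ≤ k then p (i + 1) else q (i + 1 - k))
    by_cases h1 : i + 1 ≤ k
    · rw [if_pos (by omega : i ≤ k), if_pos h1]
      exact pa i (by omega)
    · by_cases h2 : i ≤ k
      · have hik : i = k := by omega
        subst hik
        rw [if_pos h2, if_neg h1, pk, Nat.add_sub_cancel_left, ← q0]
        exact qa 0 (by omega)
      · rw [if_neg h2, if_neg h1]
        have h3 : i + 1 - k = (i - k) + 1 := by omega
        rw [h3]
        exact qa (i - k) (by omega)

/-- if `G` contains an isometric ray (a one-way infinite path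
`v 0, v 1, v 2, …` such that the graph distance between `v i` and `v j` is `|i - j|`),
then for every number `k` of cops and every strategy of the cops, the robber has a
legal play avoiding capture forever; in particular `G` is robber-win. -/
theorem robberWin_of_isometric_ray {V : Type*} (G : RefGraph V) (v : ℕ → V)
    (hray : ∀ i, G.Adj (v i) (v (i + 1)))
    (hiso : ∀ i j, sInf {m | HasWalk G (v i) (v j) m} = Nat.dist i j) :
    ∀ (k : ℕ) (c0 : Fin k → V) (S : (Fin k → V) → V → (Fin k → V)),
      (∀ cs r i, G.Adj (cs i) (S cs r i)) →
      ∃ rb : ℕ → V, (∀ n, G.Adj (rb n) (rb (n + 1))) ∧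
        ∀ n i, copsSeq S c0 rb n i ≠ rb n ∧ copsSeq S c0 rb (n + 1) i ≠ rb n := by
  intro k c0 S hS
  -- walks along the ray
  have ray_walk : ∀ a b : ℕ, HasWalk G (v a) (v (a + b)) b := by
    intro a b
    exact ⟨fun i => v (a + i), by simp, rfl, fun i _ => by
      have := hray (a + i); simpa [Nat.add_assoc] using this⟩
  -- key distance estimate
  have key : ∀ (u : V) (a b m m' : ℕ), HasWalk G u (v a) m → HasWalk G u (v b) m' →
      Nat.dist a b ≤ m + m' := by
    intro u a b m m' h1 h2
    have hw : HasWalk G (v a) (v b) (m + m') := hasWalk_trans G (hasWalk_symm G h1) h2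
    rw [← hiso a b]
    exact Nat.sInf_le hw
  classical
  -- choose bound
  let P : Fin k → Prop := fun i => ∃ l, HasWalk G (c0 i) (v 0) l
  let f : Fin k → ℕ := fun i => if h : P i then h.choose else 0
  have hf : ∀ i, P i → HasWalk G (c0 i) (v 0) (f i) := by
    intro i hP
    simp only [f, dif_pos hP]
    exact hP.choose_spec
  set N : ℕ := 2 + Finset.univ.sup f with hN
  have hNf : ∀ i, f i + 2 ≤ N := by
    intro i
    have : f i ≤ Finset.univ.sup f := Finset.le_sup (Finset.mem_univ i)
    omega
  refine ⟨fun n => v (N + n), fun n => hray (N + n), ?_⟩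
  -- cop trajectories are walks
  have copwalk : ∀ (rb : ℕ → V) (n : ℕ) (i : Fin k),
      HasWalk G (c0 i) (copsSeq S c0 rb n i) n := by
    intro rb n i
    exact ⟨fun m => copsSeq S c0 rb m i, rfl, rfl, fun m _ => hS _ _ i⟩
  intro n i
  -- if a cop reaches v (N + n) after m steps, contradiction when m ≤ n + 1
  have main : ∀ m : ℕ, m ≤ n + 1 → ¬ HasWalk G (c0 i) (v (N + n)) m := by
    intro m hm hw
    have hP : P i := by
      refine ⟨m + (N + n), ?_⟩
      have hr : HasWalk G (v (N + n)) (v 0) (N + n) :=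
        hasWalk_symm G (by simpa using ray_walk 0 (N + n))
      exact hasWalk_trans G hw hr
    have hkey := key (c0 i) (N + n) 0 m (f i) hw (hf i hP)
    have hd : Nat.dist (N + n) 0 = N + n := by simp [Nat.dist]
    rw [hd] at hkey
    have := hNf i
    omega
  constructor
  · intro hc
    have hc' : copsSeq S c0 (fun n => v (N + n)) n i = v (N + n) := hc
    exact main n (by omega) (hc' ▸ copwalk _ n i)
  · intro hc
    have hc' : copsSeq S c0 (fun n => v (N + n)) (n + 1) i = v (N + n) := hc
    exact main (n + 1) le_rfl (hc' ▸ copwalk _ (n + 1) i)
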